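/- arXiv:2402.13670 — 3 statements merged into one kernel-verified Lean document; each statement's English description precedes it below -/
import Mathlib

section
/- Let E be a real inner product space, let m ∈ (0, 1) and a ≥ 2/3 be real numbers, let X, g ∈ E with ‖X‖ ≤ a and ‖g‖ ≤ a, and let e, r ≥ 0 and η, ψ ∈ [0, a] be real numbers satisfying ⟨X, g⟩ ≤ m (‖g‖² + η + ψ) − e − r. Then there exists μ ∈ [0, 1] such that (1/2)‖μ X + (1 − μ) g‖² + μ (e + r) + (1 − μ)(η + ψ) ≤ (1/2)‖g‖² + η + ψ − (1 − m)² (‖g‖² + η + ψ)² / (8 a²). -/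
set_option maxHeartbeats 1000000


open RealInnerProductSpace

/-- Key decrease estimate in the proof of Lemma 5.5: after a null step the
optimal value of the bundle subproblem decreases quantitatively. -/
theorem null_step_decrease_estimate
    {E : Type*} [NormedAddCommGroup E] [InnerProductSpace ℝ E]
    (m a : ℝ) (hm : m ∈ Set.Ioo (0 : ℝ) 1) (ha : (2 : ℝ) / 3 ≤ a)
    (X g : E) (hX : ‖X‖ ≤ a) (hg : ‖g‖ ≤ a)
    (e r η ψ : ℝ) (he : 0 ≤ e) (hr : 0 ≤ r)
    (hη : η ∈ Set.Icc (0 : ℝ) a) (hψ : ψ ∈ Set.Icc (0 : ℝ) a)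
    (hnull : ⟪X, g⟫ ≤ m * (‖g‖ ^ 2 + η + ψ) - e - r) :
    ∃ μ ∈ Set.Icc (0 : ℝ) 1,
      (1 / 2) * ‖μ • X + (1 - μ) • g‖ ^ 2 + μ * (e + r) + (1 - μ) * (η + ψ) ≤
        (1 / 2) * ‖g‖ ^ 2 + η + ψ -
          (1 - m) ^ 2 * (‖g‖ ^ 2 + η + ψ) ^ 2 / (8 * a ^ 2) := by
  obtain ⟨hm0, hm1⟩ := hm
  obtain ⟨hη0, hηa⟩ := hη
  obtain ⟨hψ0, hψa⟩ := hψ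
  have ha0 : 0 < a := lt_of_lt_of_le (by norm_num) ha
  have ha2 : 0 < a ^ 2 := by positivity
  set D : ℝ := ‖g‖ ^ 2 + η + ψ with hDdef
  clear_value D
  have hD0 : 0 ≤ D := by rw [hDdef]; positivity
  set μ : ℝ := (1 - m) * D / (4 * a ^ 2) with hμdef
  clear_value μ
  have hμ0 : 0 ≤ μ := by
    rw [hμdef]
    apply div_nonneg
    · exact mul_nonneg (by linarith) hD0
    · positivity
  have hgsq : ‖g‖ ^ 2 ≤ a ^ 2 := by nlinarith [norm_nonneg g]
  have hXsq : ‖X‖ ^ 2 ≤ a ^ 2 := by nlinarith [norm_nonneg X]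
  have hDle : D ≤ a ^ 2 + 2 * a := by rw [hDdef]; linarith
  have hμ1 : μ ≤ 1 := by
    rw [hμdef, div_le_one (by positivity)]
    nlinarith
  have h1μ : 0 ≤ 1 - μ := by linarith
  refine ⟨μ, ⟨hμ0, hμ1⟩, ?_⟩
  have expand : ‖μ • X + (1 - μ) • g‖ ^ 2
      = μ ^ 2 * ‖X‖ ^ 2 + 2 * μ * (1 - μ) * ⟪X, g⟫ + (1 - μ) ^ 2 * ‖g‖ ^ 2 := by
    rw [norm_add_sq_real, real_inner_smul_left, real_inner_smul_right,
      norm_smul, norm_smul, Real.norm_eq_abs, Real.norm_eq_abs,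
      abs_of_nonneg hμ0, abs_of_nonneg h1μ]
    ring
  rw [expand]
  set s : ℝ := ⟪X, g⟫ with hsdef
  clear_value s
  have hL : s - ‖g‖ ^ 2 + e + r - η - ψ ≤ -(1 - m) * D := by
    have h1 : s ≤ m * D - e - r := hnull
    have h2 : D = ‖g‖ ^ 2 + η + ψ := hDdef
    nlinarith [h1, h2]
  have hQ : ‖X‖ ^ 2 - 2 * s + ‖g‖ ^ 2 ≤ 4 * a ^ 2 := by
    have h := abs_real_inner_le_norm X g
    have hns : -s ≤ ‖X‖ * ‖g‖ := by
      rw [hsdef]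
      have h2 := neg_abs_le (⟪X, g⟫ : ℝ)
      linarith
    nlinarith [norm_nonneg X, norm_nonneg g]
  -- LHS = φ(0) + μ * L + (μ^2/2) * Q
  have key : μ * (s - ‖g‖ ^ 2 + e + r - η - ψ) + (μ ^ 2 / 2) * (‖X‖ ^ 2 - 2 * s + ‖g‖ ^ 2)
      ≤ -((1 - m) ^ 2 * D ^ 2 / (8 * a ^ 2)) := by
    have h1 : μ * (s - ‖g‖ ^ 2 + e + r - η - ψ) ≤ μ * (-(1 - m) * D) :=
      mul_le_mul_of_nonneg_left hL hμ0
    have h2 : (μ ^ 2 / 2) * (‖X‖ ^ 2 - 2 * s + ‖g‖ ^ 2) ≤ (μ ^ 2 / 2) * (4 * a ^ 2) :=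
      mul_le_mul_of_nonneg_left hQ (by positivity)
    have hμeq : μ * (4 * a ^ 2) = (1 - m) * D := by
      rw [hμdef]; field_simp
    have : μ * (-(1 - m) * D) + (μ ^ 2 / 2) * (4 * a ^ 2)
        = -((1 - m) ^ 2 * D ^ 2 / (8 * a ^ 2)) := by
      rw [hμdef]; field_simp; ring
    calc μ * (s - ‖g‖ ^ 2 + e + r - η - ψ) + (μ ^ 2 / 2) * (‖X‖ ^ 2 - 2 * s + ‖g‖ ^ 2)
        ≤ μ * (-(1 - m) * D) + (μ ^ 2 / 2) * (4 * a ^ 2) := add_le_add h1 h2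
      _ = -((1 - m) ^ 2 * D ^ 2 / (8 * a ^ 2)) := this
  have final : (1 / 2) * (μ ^ 2 * ‖X‖ ^ 2 + 2 * μ * (1 - μ) * s + (1 - μ) ^ 2 * ‖g‖ ^ 2)
      + μ * (e + r) + (1 - μ) * (η + ψ)
      = (1 / 2) * ‖g‖ ^ 2 + η + ψ
        + (μ * (s - ‖g‖ ^ 2 + e + r - η - ψ) + (μ ^ 2 / 2) * (‖X‖ ^ 2 - 2 * s + ‖g‖ ^ 2)) := by
    ring
  linarith [key, final]
end

section
/- Let (X, dist) be a metric space, let (p_k) be a sequence in X, let p* ∈ X, and let (b_k) be a sequence of nonnegative reals with Σ_{k=0}^∞ b_k < ∞ such that dist(p*, p_{k+1})² ≤ dist(p*, p_k)² + b_k for all k. If some subsequence (p_{k_n}) converges to p*, then the whole sequence (p_k) converges to p*. -/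
open Filter

/-- Quasi-Fejér convergence: a sequence with summably perturbed distances to a
point converges to that point as soon as some subsequence does. -/
theorem quasi_fejer_convergence
    {X : Type*} [MetricSpace X]
    (p : ℕ → X) (pStar : X) (b : ℕ → ℝ)
    (hb_nonneg : ∀ k, 0 ≤ b k) (hb_summable : Summable b)
    (hfejer : ∀ k, dist pStar (p (k + 1)) ^ 2 ≤ dist pStar (p k) ^ 2 + b k)
    (φ : ℕ → ℕ) (hφ : StrictMono φ)
    (hsub : Tendsto (fun n => p (φ n)) atTop (nhds pStar)) :
    Tendsto p atTop (nhds pStar) := by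
  have hd : ∀ k m, k ≤ m →
      dist pStar (p m) ^ 2 ≤ dist pStar (p k) ^ 2 + ∑ j ∈ Finset.Ico k m, b j := by
    intro k m hkm
    induction m, hkm using Nat.le_induction with
    | base => simp
    | succ m hm ih =>
      have h := hfejer m
      rw [Finset.sum_Ico_succ_top hm]
      linarith
  rw [Metric.tendsto_atTop]
  intro ε hε
  have hε2 : 0 < ε ^ 2 / 2 := by positivity
  have htail : Tendsto (fun i => ∑' k, b (k + i)) atTop (nhds 0) :=
    tendsto_sum_nat_add b
  obtain ⟨K, hK⟩ := (htail.eventually (gt_mem_nhds hε2)).exists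
  have hdsub : Tendsto (fun n => dist pStar (p (φ n)) ^ 2) atTop (nhds 0) := by
    have h1 : Tendsto (fun n => dist pStar (p (φ n))) atTop (nhds 0) := by
      have := hsub.dist (tendsto_const_nhds (x := pStar) (f := atTop))
      simpa [dist_comm] using this
    have := h1.pow 2
    simpa using this
  have hev : ∀ᶠ n in atTop, K ≤ φ n :=
    eventually_atTop.2 ⟨K, fun n hn => hn.trans hφ.le_apply⟩
  obtain ⟨n₁, hKn, hsmall⟩ :=
    (hev.and (hdsub.eventually (gt_mem_nhds hε2))).exists
  refine ⟨φ n₁, fun m hm => ?_⟩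
  have hsum : ∑ j ∈ Finset.Ico (φ n₁) m, b j ≤ ∑' k, b (k + K) := by
    calc ∑ j ∈ Finset.Ico (φ n₁) m, b j
        ≤ ∑ j ∈ Finset.Ico K m, b j := by
          apply Finset.sum_le_sum_of_subset_of_nonneg
          · exact Finset.Ico_subset_Ico hKn le_rfl
          · intro i _ _; exact hb_nonneg i
      _ = ∑ j ∈ Finset.range (m - K), b (K + j) := by rw [Finset.sum_Ico_eq_sum_range]
      _ ≤ ∑' k, b (k + K) := by
          have hs : Summable (fun k => b (k + K)) :=
            (summable_nat_add_iff K).2 hb_summable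
          have := Summable.sum_le_tsum (Finset.range (m - K))
            (fun i _ => hb_nonneg (i + K)) hs
          refine le_trans (le_of_eq ?_) this
          exact Finset.sum_congr rfl (fun i _ => by rw [add_comm])
  have hkey := hd (φ n₁) m hm
  have hfinal : dist pStar (p m) ^ 2 < ε ^ 2 := by linarith
  have h0 : (0:ℝ) ≤ dist (p m) pStar := dist_nonneg
  rw [dist_comm] at hfinal
  nlinarith
end

section
/- Let E be a finite-dimensional real inner product space and let f : E → ℝ be lower semicontinuous with a nonempty set of global minimizers. Let (p_k), (g_k) be sequences in E, and (ε_k), (t_k) real sequences with ε_k ≥ 0 and t_k ∈ [0, 1], satisfying: (i) for every k and every q ∈ E, f(q) ≥ f(p_k) + ⟨g_k, q − p_k⟩ − ε_k; (ii) p_{k+1} = p_k − t_k g_k for every k; (iii) Σ_{k=0}^∞ t_k (‖g_k‖² + ε_k) < ∞; and (iv) there is a subsequence (k_n) with g_{k_n} → 0 and ε_{k_n} → 0. Then the sequence (p_k) converges to a global minimizer of f. -/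
/-!
If `g` is an `ε`-subgradient at `p` and `q` is a minimizer, then `⟪g, p - q⟫ ≥ -ε`, so a step of
length `t ≤ 1` along `-g` increases `‖p - q‖²` by at most `2 t (‖g‖² + ε)`. These increments are
summable, hence `‖p_k - q‖` converges for every minimizer `q` (quasi-Fejér monotonicity). In
particular `(p_k)` is bounded, and a cluster point of the subsequence `p_{k_n}` is a minimizer,
because the graph of the `ε`-subdifferential of a lower semicontinuous function is closed. Taking
`q` to be this cluster point, the limit of `‖p_k - q‖` is `0`.
-/

open RealInnerProductSpace Filter Set Topology

section EpsSubgradient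

variable {E : Type*} [NormedAddCommGroup E] [InnerProductSpace ℝ E]

def IsEpsSubgradient (f : E → ℝ) (ε : ℝ) (g x : E) : Prop :=
  ∀ q, f x + ⟪g, q - x⟫ - ε ≤ f q

theorem isEpsSubgradient_zero_zero_iff {f : E → ℝ} {x : E} :
    IsEpsSubgradient f 0 0 x ↔ ∀ q, f x ≤ f q := by
  simp [IsEpsSubgradient]

theorem IsEpsSubgradient.of_tendsto {f : E → ℝ} (hf : LowerSemicontinuous f)
    {x g : ℕ → E} {ε : ℕ → ℝ} {x₀ g₀ : E} {ε₀ : ℝ}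
    (hsub : ∀ n, IsEpsSubgradient f (ε n) (g n) (x n))
    (hx : Tendsto x atTop (𝓝 x₀)) (hg : Tendsto g atTop (𝓝 g₀))
    (hε : Tendsto ε atTop (𝓝 ε₀)) :
    IsEpsSubgradient f ε₀ g₀ x₀ := by
  intro q
  have hbound : Tendsto (fun n => f q - ⟪g n, q - x n⟫ + ε n) atTop
      (𝓝 (f q - ⟪g₀, q - x₀⟫ + ε₀)) :=
    (tendsto_const_nhds.sub (hg.inner (tendsto_const_nhds.sub hx))).add hε
  suffices f x₀ ≤ f q - ⟪g₀, q - x₀⟫ + ε₀ by linarith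
  refine le_of_forall_lt_imp_le_of_dense fun y hy => ge_of_tendsto hbound ?_
  filter_upwards [hx.eventually (hf x₀ y hy)] with n hn
  linarith [hsub n q]

theorem IsEpsSubgradient.norm_sub_smul_sub_sq_le {f : E → ℝ} {ε t : ℝ} {g x q : E}
    (hsub : IsEpsSubgradient f ε g x) (hq : f q ≤ f x) (ht : t ∈ Icc (0 : ℝ) 1) :
    ‖x - t • g - q‖ ^ 2 ≤ ‖x - q‖ ^ 2 + 2 * (t * (‖g‖ ^ 2 + ε)) := by
  obtain ⟨ht₀, ht₁⟩ := ht
  have hinner : -ε ≤ ⟪g, x - q⟫ := by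
    have := hsub q
    rw [← neg_sub x q, inner_neg_right] at this
    linarith
  have hsq : t ^ 2 * ‖g‖ ^ 2 ≤ t * ‖g‖ ^ 2 := by
    gcongr
    nlinarith
  calc ‖x - t • g - q‖ ^ 2 = ‖x - q‖ ^ 2 - 2 * (t * ⟪g, x - q⟫) + t ^ 2 * ‖g‖ ^ 2 := by
        rw [sub_right_comm, norm_sub_sq_real, real_inner_smul_right, real_inner_comm,
          norm_smul, mul_pow, Real.norm_eq_abs, sq_abs]
    _ ≤ ‖x - q‖ ^ 2 + 2 * (t * (‖g‖ ^ 2 + ε)) := by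
        nlinarith [mul_le_mul_of_nonneg_left hinner ht₀, mul_nonneg ht₀ (sq_nonneg ‖g‖)]

end EpsSubgradient

theorem exists_tendsto_of_le_add_of_summable {a s : ℕ → ℝ} (ha : BddBelow (range a))
    (hs : Summable s) (h : ∀ k, a (k + 1) ≤ a k + s k) :
    ∃ L, Tendsto a atTop (𝓝 L) := by
  set S : ℕ → ℝ := fun k => ∑ j ∈ Finset.range k, s j
  have hS : Tendsto S atTop (𝓝 (∑' j, s j)) := hs.hasSum.tendsto_sum_nat
  have hanti : Antitone (a - S) := antitone_nat_of_succ_le fun k => by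
    simp only [Pi.sub_apply, S, Finset.sum_range_succ]
    linarith [h k]
  have hbdd : BddBelow (range (a - S)) := by
    obtain ⟨A, hA⟩ := ha
    obtain ⟨B, hB⟩ := hS.bddAbove_range
    refine ⟨A - B, forall_mem_range.2 fun k => ?_⟩
    show A - B ≤ a k - S k
    linarith [hA (mem_range_self k), hB (mem_range_self k)]
  exact ⟨_, by simpa using (tendsto_atTop_ciInf hanti hbdd).add hS⟩

section BundleIterates

variable {E : Type*} [NormedAddCommGroup E] [InnerProductSpace ℝ E] {f : E → ℝ}
  {p g : ℕ → E} {ε t : ℕ → ℝ}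

theorem exists_tendsto_norm_sub_of_isEpsSubgradient
    (hsub : ∀ k, IsEpsSubgradient f (ε k) (g k) (p k))
    (hstep : ∀ k, p (k + 1) = p k - t k • g k) (ht : ∀ k, t k ∈ Icc (0 : ℝ) 1)
    (hsum : Summable fun k => t k * (‖g k‖ ^ 2 + ε k)) (q : E) (hq : ∀ q', f q ≤ f q') :
    ∃ r, Tendsto (fun k => ‖p k - q‖) atTop (𝓝 r) := by
  obtain ⟨L, hL⟩ := exists_tendsto_of_le_add_of_summable (a := fun k => ‖p k - q‖ ^ 2)
    ⟨0, forall_mem_range.2 fun k => sq_nonneg _⟩ (hsum.mul_left 2) fun k => by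
      simpa only [hstep k] using (hsub k).norm_sub_smul_sub_sq_le (hq _) (ht k)
  refine ⟨√L, ?_⟩
  simpa only [Real.sqrt_sq (norm_nonneg _)] using hL.sqrt

end BundleIterates

theorem bundle_method_converges_to_minimizer_general
    {E : Type*} [NormedAddCommGroup E] [InnerProductSpace ℝ E]
    [FiniteDimensional ℝ E]
    (f : E → ℝ) (hlsc : LowerSemicontinuous f)
    (hmin_nonempty : ∃ q, ∀ q', f q ≤ f q')
    (p g : ℕ → E) (ε t : ℕ → ℝ)
    (ht : ∀ k, t k ∈ Set.Icc (0 : ℝ) 1)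
    (hsub : ∀ k, ∀ q, f q ≥ f (p k) + ⟪g k, q - p k⟫ - ε k)
    (hstep : ∀ k, p (k + 1) = p k - t k • g k)
    (hsum : Summable (fun k => t k * (‖g k‖ ^ 2 + ε k)))
    (φ : ℕ → ℕ) (hφ : StrictMono φ)
    (hgφ : Tendsto (fun n => g (φ n)) atTop (nhds 0))
    (hεφ : Tendsto (fun n => ε (φ n)) atTop (nhds 0)) :
    ∃ pStar, Tendsto p atTop (nhds pStar) ∧ ∀ q, f pStar ≤ f q := by
  have hdist := exists_tendsto_norm_sub_of_isEpsSubgradient hsub hstep ht hsum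
  obtain ⟨q₀, hq₀⟩ := hmin_nonempty
  obtain ⟨r₀, hr₀⟩ := hdist q₀ hq₀
  have hbdd : Bornology.IsBounded (range p) := by
    obtain ⟨C, hC⟩ := hr₀.bddAbove_range
    refine (Metric.isBounded_closedBall (x := q₀) (r := C)).subset ?_
    rintro _ ⟨k, rfl⟩
    simpa only [Metric.mem_closedBall, dist_eq_norm] using hC (mem_range_self k)
  obtain ⟨pStar, -, ψ, hψ, hpψ⟩ := tendsto_subseq_of_bounded hbdd fun n => mem_range_self (φ n)
  have hmin : ∀ q, f pStar ≤ f q := isEpsSubgradient_zero_zero_iff.1 <|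
    IsEpsSubgradient.of_tendsto hlsc (fun n => hsub _) hpψ (hgφ.comp hψ.tendsto_atTop)
      (hεφ.comp hψ.tendsto_atTop)
  obtain ⟨r, hr⟩ := hdist pStar hmin
  have hr_zero : r = 0 := tendsto_nhds_unique (hr.comp (hφ.comp hψ).tendsto_atTop) <| by
    simpa [Function.comp_def] using (hpψ.sub_const pStar).norm
  refine ⟨pStar, ?_, hmin⟩
  rw [tendsto_iff_norm_sub_tendsto_zero, ← hr_zero]
  exact hr

/-- Flat-case content of Theorem 5.8: convergence of the convex bundle method
to a global minimizer. -/
theorem bundle_method_converges_to_minimizer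
    {E : Type*} [NormedAddCommGroup E] [InnerProductSpace ℝ E]
    [FiniteDimensional ℝ E]
    (f : E → ℝ) (hlsc : LowerSemicontinuous f)
    (hmin_nonempty : ∃ q, ∀ q', f q ≤ f q')
    (p g : ℕ → E) (ε t : ℕ → ℝ)
    (hε : ∀ k, 0 ≤ ε k) (ht : ∀ k, t k ∈ Set.Icc (0 : ℝ) 1)
    (hsub : ∀ k, ∀ q, f q ≥ f (p k) + ⟪g k, q - p k⟫ - ε k)
    (hstep : ∀ k, p (k + 1) = p k - t k • g k)
    (hsum : Summable (fun k => t k * (‖g k‖ ^ 2 + ε k)))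
    (φ : ℕ → ℕ) (hφ : StrictMono φ)
    (hgφ : Tendsto (fun n => g (φ n)) atTop (nhds 0))
    (hεφ : Tendsto (fun n => ε (φ n)) atTop (nhds 0)) :
    ∃ pStar, Tendsto p atTop (nhds pStar) ∧ ∀ q, f pStar ≤ f q :=
  bundle_method_converges_to_minimizer_general f hlsc hmin_nonempty p g ε t ht hsub hstep hsum φ hφ
    hgφ hεφ
end
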